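/- Let F be a field and v, w ∈ F(t). The sequence βᵢ = (v−w)·αᵢ + w, where αᵢ = tⁱ/(tⁱ+1) ∈ F(t), lies in F(t) and converges to v under ν_∞ (i.e. in F((t⁻¹))) and to w under ν₀ (i.e. in F((t))). -/

import Mathlib

open RatFunc Polynomial

/- The valuation at infinity on `F(t)`: `ν_∞(p/q) = deg q - deg p`, with `ν_∞ 0 = ⊤`. -/
open Classical in
noncomputable def nuInf {F : Type*} [Field F] (x : RatFunc F) : WithTop ℤ :=
  if x = 0 then ⊤ else (-(x.intDegree) : ℤ)

/- The valuation at zero on `F(t)`: the order of vanishing at `t = 0`, with `ν₀ 0 = ⊤`. -/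
open Classical in
noncomputable def nuZero {F : Type*} [Field F] (x : RatFunc F) : WithTop ℤ :=
  if x = 0 then ⊤
  else ((x.num.rootMultiplicity 0 : ℤ) - (x.denom.rootMultiplicity 0 : ℤ) : ℤ)

/-- The sequence `α i = t^i / (t^i + 1)` in `F(t)`. -/
noncomputable def alphaSeq (F : Type*) [Field F] (i : ℕ) : RatFunc F :=
  RatFunc.X ^ i / (RatFunc.X ^ i + 1)

lemma Dpoly_ne {F : Type*} [Field F] {i : ℕ} (hi : 1 ≤ i) :
    (Polynomial.X ^ i + 1 : F[X]) ≠ 0 := by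
  intro h
  have h2 : (Polynomial.X ^ i + Polynomial.C 1 : F[X]).natDegree = 0 := by
    rw [Polynomial.C_1, h, Polynomial.natDegree_zero]
  rw [Polynomial.natDegree_X_pow_add_C] at h2
  omega

lemma beta_repr {F : Type*} [Field F] (c : RatFunc F) (i : ℕ) (hi : 1 ≤ i) :
    c * (alphaSeq F i - 1) =
      algebraMap F[X] (RatFunc F) (-c.num) /
        algebraMap F[X] (RatFunc F) (c.denom * (Polynomial.X ^ i + 1)) ∧
    c * alphaSeq F i =
      algebraMap F[X] (RatFunc F) (c.num * Polynomial.X ^ i) /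
        algebraMap F[X] (RatFunc F) (c.denom * (Polynomial.X ^ i + 1)) := by
  have hB : algebraMap F[X] (RatFunc F) c.denom ≠ 0 :=
    RatFunc.algebraMap_ne_zero c.denom_ne_zero
  have hDne : algebraMap F[X] (RatFunc F) (Polynomial.X ^ i + 1) ≠ 0 :=
    RatFunc.algebraMap_ne_zero (Dpoly_ne hi)
  have hXpow : (RatFunc.X ^ i : RatFunc F) = algebraMap F[X] (RatFunc F) (Polynomial.X ^ i) := by
    simp [map_pow, RatFunc.algebraMap_X]
  have hD : algebraMap F[X] (RatFunc F) (Polynomial.X ^ i + 1)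
      = algebraMap F[X] (RatFunc F) (Polynomial.X ^ i) + 1 := by
    simp [map_add]
  have hcr : c = algebraMap F[X] (RatFunc F) c.num / algebraMap F[X] (RatFunc F) c.denom :=
    (RatFunc.num_div_denom c).symm
  have hDne' : (RatFunc.X ^ i + 1 : RatFunc F) ≠ 0 := by
    rw [hXpow, ← hD]; exact hDne
  have hnum : c * algebraMap F[X] (RatFunc F) c.denom = algebraMap F[X] (RatFunc F) c.num := by
    have := div_mul_cancel₀ (algebraMap F[X] (RatFunc F) c.num) hB
    rwa [RatFunc.num_div_denom] at this
  constructor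
  · rw [alphaSeq, map_neg, map_mul, hXpow, hD]
    have hE : algebraMap F[X] (RatFunc F) (Polynomial.X ^ i) + 1 ≠ 0 := hD ▸ hDne
    field_simp
    try simp only [hXpow]
    linear_combination (-1 : RatFunc F) * hnum
  · rw [alphaSeq, map_mul, map_mul, hXpow, hD]
    have hE : algebraMap F[X] (RatFunc F) (Polynomial.X ^ i) + 1 ≠ 0 := hD ▸ hDne
    field_simp
    try simp only [hXpow]
    linear_combination (algebraMap F[X] (RatFunc F) (Polynomial.X ^ i)) * hnum

lemma intDegree_inv' {F : Type*} [Field F] {x : RatFunc F} (hx : x ≠ 0) :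
    (x⁻¹).intDegree = -x.intDegree := by
  have h := RatFunc.intDegree_mul hx (inv_ne_zero hx)
  rw [mul_inv_cancel₀ hx, RatFunc.intDegree_one] at h
  omega

lemma num_denom_rm {F : Type*} [Field F] (p q : F[X]) (hp : p ≠ 0) (hq : q ≠ 0) :
    let x := (algebraMap F[X] (RatFunc F) p) / (algebraMap F[X] (RatFunc F) q)
    ((x.num.rootMultiplicity 0 : ℤ) - (x.denom.rootMultiplicity 0 : ℤ))
      = (p.rootMultiplicity 0 : ℤ) - (q.rootMultiplicity 0 : ℤ) := by
  intro x
  have hx : x ≠ 0 := div_ne_zero (RatFunc.algebraMap_ne_zero hp) (RatFunc.algebraMap_ne_zero hq)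
  have hnum : x.num ≠ 0 := RatFunc.num_ne_zero hx
  have hkey : x.num * q = p * x.denom := by
    apply RatFunc.algebraMap_injective F
    have h1 : algebraMap F[X] (RatFunc F) x.num / algebraMap F[X] (RatFunc F) x.denom
        = algebraMap F[X] (RatFunc F) p / algebraMap F[X] (RatFunc F) q :=
      RatFunc.num_div_denom x
    rw [div_eq_div_iff (RatFunc.algebraMap_ne_zero x.denom_ne_zero)
      (RatFunc.algebraMap_ne_zero hq)] at h1
    rw [map_mul, map_mul]
    exact h1
  have h3 := Polynomial.rootMultiplicity_mul (p := x.num) (q := q)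
    (mul_ne_zero hnum hq) (x := (0:F))
  have h2 := Polynomial.rootMultiplicity_mul (p := p) (q := x.denom)
    (mul_ne_zero hp x.denom_ne_zero) (x := (0:F))
  rw [hkey, h2] at h3
  omega

/-- For `v, w ∈ F(t)`, the sequence `β i = (v - w) * α i + w` converges to `v` under `ν_∞`
and to `w` under `ν₀`. -/
theorem stmt_4 {F : Type*} [Field F] (v w : RatFunc F) :
    (∀ L : ℤ, ∃ N : ℕ, ∀ i ≥ N,
      (L : WithTop ℤ) ≤ nuInf (((v - w) * alphaSeq F i + w) - v)) ∧
    (∀ L : ℤ, ∃ N : ℕ, ∀ i ≥ N,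
      (L : WithTop ℤ) ≤ nuZero (((v - w) * alphaSeq F i + w) - w)) := by
  by_cases hc0 : v - w = 0
  · constructor <;> intro L <;> refine ⟨0, fun i _ => ?_⟩ <;>
      · rw [hc0]
        have hw : w = v := by linear_combination -hc0
        simp [hw, nuInf, nuZero]
  set c := v - w with hc
  have hp : c.num ≠ 0 := RatFunc.num_ne_zero hc0
  have hq : c.denom ≠ 0 := c.denom_ne_zero
  constructor
  · intro L
    refine ⟨max 1 (L + c.intDegree).toNat, fun i hi => ?_⟩
    have hi1 : 1 ≤ i := le_trans (le_max_left _ _) hi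
    have hE : ((c * alphaSeq F i + w) - v) =
        algebraMap F[X] (RatFunc F) (-c.num) /
          algebraMap F[X] (RatFunc F) (c.denom * (Polynomial.X ^ i + 1)) := by
      rw [show ((c * alphaSeq F i + w) - v) = c * (alphaSeq F i - 1) by rw [hc]; ring]
      exact (beta_repr c i hi1).1
    have hA : algebraMap F[X] (RatFunc F) (-c.num) ≠ 0 :=
      RatFunc.algebraMap_ne_zero (neg_ne_zero.mpr hp)
    have hB : algebraMap F[X] (RatFunc F) (c.denom * (Polynomial.X ^ i + 1)) ≠ 0 :=
      RatFunc.algebraMap_ne_zero (mul_ne_zero hq (Dpoly_ne hi1))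
    have hne : ((c * alphaSeq F i + w) - v) ≠ 0 := by
      rw [hE]; exact div_ne_zero hA hB
    have hdeg : ((c * alphaSeq F i + w) - v).intDegree = c.intDegree - i := by
      rw [hE, div_eq_mul_inv, RatFunc.intDegree_mul hA (inv_ne_zero hB), intDegree_inv' hB,
        RatFunc.intDegree_polynomial, RatFunc.intDegree_polynomial,
        Polynomial.natDegree_neg, Polynomial.natDegree_mul hq (Dpoly_ne hi1)]
      have : (Polynomial.X ^ i + 1 : F[X]).natDegree = i := by
        rw [show (1 : F[X]) = Polynomial.C 1 by simp, Polynomial.natDegree_X_pow_add_C]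
      rw [this, RatFunc.intDegree]
      push_cast
      ring
    rw [nuInf, if_neg hne, hdeg]
    have h2 : L + c.intDegree ≤ (i : ℤ) := by
      have := le_trans (le_max_right 1 (L + c.intDegree).toNat) hi
      omega
    have : (L : ℤ) ≤ -(c.intDegree - i) := by omega
    exact_mod_cast WithTop.coe_le_coe.mpr this
  · intro L
    refine ⟨max 1 (L - (c.num.rootMultiplicity 0 : ℤ)
      + (c.denom.rootMultiplicity 0 : ℤ)).toNat, fun i hi => ?_⟩
    have hi1 : 1 ≤ i := le_trans (le_max_left _ _) hi
    have hE : ((c * alphaSeq F i + w) - w) =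
        algebraMap F[X] (RatFunc F) (c.num * Polynomial.X ^ i) /
          algebraMap F[X] (RatFunc F) (c.denom * (Polynomial.X ^ i + 1)) := by
      rw [show ((c * alphaSeq F i + w) - w) = c * alphaSeq F i by ring]
      exact (beta_repr c i hi1).2
    have hp' : (c.num * Polynomial.X ^ i : F[X]) ≠ 0 :=
      mul_ne_zero hp (pow_ne_zero _ Polynomial.X_ne_zero)
    have hq' : (c.denom * (Polynomial.X ^ i + 1) : F[X]) ≠ 0 :=
      mul_ne_zero hq (Dpoly_ne hi1)
    have hne : ((c * alphaSeq F i + w) - w) ≠ 0 := by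
      rw [hE]
      exact div_ne_zero (RatFunc.algebraMap_ne_zero hp') (RatFunc.algebraMap_ne_zero hq')
    have hrm := num_denom_rm (c.num * Polynomial.X ^ i) (c.denom * (Polynomial.X ^ i + 1)) hp' hq'
    simp only at hrm
    have hrm1 : (c.num * Polynomial.X ^ i).rootMultiplicity 0
        = c.num.rootMultiplicity 0 + i := by
      rw [Polynomial.rootMultiplicity_mul hp']
      congr 1
      simpa using Polynomial.rootMultiplicity_X_sub_C_pow (0 : F) i
    have hrm2 : ((c.denom * (Polynomial.X ^ i + 1)) : F[X]).rootMultiplicity 0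
        = c.denom.rootMultiplicity 0 := by
      rw [Polynomial.rootMultiplicity_mul hq']
      have : ¬ (Polynomial.X ^ i + 1 : F[X]).IsRoot 0 := by
        simp [Polynomial.IsRoot, zero_pow (by omega : i ≠ 0)]
      rw [Polynomial.rootMultiplicity_eq_zero this, add_zero]
    rw [nuZero, if_neg hne, hE, hrm, hrm1, hrm2]
    have h2 : L - (c.num.rootMultiplicity 0 : ℤ) + (c.denom.rootMultiplicity 0 : ℤ)
        ≤ (i : ℤ) := by
      have := le_trans (le_max_right 1 _) hi
      omega
    have : (L : ℤ) ≤ ((c.num.rootMultiplicity 0 + i : ℕ) : ℤ)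
        - (c.denom.rootMultiplicity 0 : ℤ) := by push_cast; omega
    exact_mod_cast WithTop.coe_le_coe.mpr this
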